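/- arXiv:1201.5853 — 4 statements merged into one kernel-verified Lean document; each statement's English description precedes it below -/
import Mathlib

section
/- Every permutation α of {1,…,d} admits an alternated factorization: α can be written as a product of transpositions (d u₁)(u₁ u₂)⋯(u_{k-1} u_k) in which each consecutive pair of transpositions shares exactly one element, i.e., for every i the elements u_i, u_{i+1}, u_{i+2} are pairwise distinct (with the first transposition containing d). -/
/-!
Multiplying a chain product `(h q)⋯` on the left by a swap `(x y)` again gives a chain product
that still ends at the same point: if `h ∈ {x, y}` the swap either cancels against `(h q)` or
is prepended as `(y h)`; otherwise `(x y) = (h x)(x y)(y h)` is prepended as a detour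
`h x y h`, with `x` and `y` ordered so that the new chain stays alternating. Induction on a
factorization of `α⁻¹` into swaps yields an alternating chain ending at `d`; its reverse starts
at `d` and has product `α`.
-/

open Equiv

section Alternating

variable {X : Type*}

def IsAlternating (l : List X) : Prop :=
  l.IsChain (· ≠ ·) ∧ ∀ a b c, [a, b, c] <:+: l → a ≠ c

lemma isAlternating_cons {a : X} {l : List X} :
    IsAlternating (a :: l) ↔
      (∀ b ∈ l.head?, a ≠ b) ∧ (∀ c ∈ l.tail.head?, a ≠ c) ∧ IsAlternating l := by
  have prefix_iff : (∀ a' b c, [a', b, c] <+: a :: l → a' ≠ c) ↔ ∀ c ∈ l.tail.head?, a ≠ c := by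
    rcases l with _ | ⟨b, _ | ⟨c, l⟩⟩ <;> simp [List.cons_prefix_cons]
    grind
  simp only [IsAlternating, List.isChain_cons, List.infix_cons_iff, or_imp, forall_and,
    prefix_iff]
  tauto

lemma IsAlternating.reverse {l : List X} (hl : IsAlternating l) : IsAlternating l.reverse :=
  ⟨List.isChain_reverse.2 (hl.1.imp fun _ _ => Ne.symm),
    fun a b c habc => (hl.2 c b a (List.reverse_infix.1 habc)).symm⟩

lemma IsAlternating.getElem_ne {l : List X} (hl : IsAlternating l) {i : ℕ}
    (hi : i + 2 < l.length) : l[i] ≠ l[i + 2] := by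
  have hdrop : l.drop i = [l[i], l[i + 1], l[i + 2]] ++ l.drop (i + 3) := by
    rw [List.drop_eq_getElem_cons, List.drop_eq_getElem_cons, List.drop_eq_getElem_cons]; rfl
  exact hl.2 _ _ _
    ⟨l.take i, l.drop (i + 3), by rw [List.append_assoc, ← hdrop, List.take_append_drop]⟩

lemma isAlternating_detour {h a b : X} {l : List X} (hha : h ≠ a) (hhb : h ≠ b) (hab : a ≠ b)
    (hbl : b ∉ l.head?) (hl : IsAlternating (h :: l)) : IsAlternating (h :: a :: b :: h :: l) := by
  refine isAlternating_cons.2 ⟨by simpa using hha, by simpa using hhb,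
    isAlternating_cons.2 ⟨by simpa using hab, by simpa using hha.symm,
      isAlternating_cons.2 ⟨by simpa using hhb.symm, fun c hc => ?_, hl⟩⟩⟩
  rintro rfl
  exact hbl hc

end Alternating

section SwapChain

variable {X : Type*} [DecidableEq X]

def swapChainProd : List X → Perm X
  | [] => 1
  | [_] => 1
  | a :: b :: l => swap a b * swapChainProd (b :: l)

lemma swapChainProd_eq_prod_zip :
    ∀ l : List X, swapChainProd l = ((l.zip l.tail).map fun p => swap p.1 p.2).prod
  | [] | [_] => rfl
  | a :: b :: l => by
    rw [swapChainProd, swapChainProd_eq_prod_zip (b :: l)]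
    rfl

lemma swapChainProd_append_pair :
    ∀ (l : List X) (a b : X), swapChainProd (l ++ [a, b]) = swapChainProd (l ++ [a]) * swap a b
  | [], a, b => by simp [swapChainProd]
  | [c], a, b => by simp [swapChainProd]
  | c :: d :: l, a, b => by
    have ih := swapChainProd_append_pair (d :: l) a b
    simp only [List.cons_append] at ih ⊢
    rw [swapChainProd, swapChainProd, ih, mul_assoc]

lemma swapChainProd_reverse : ∀ l : List X, swapChainProd l.reverse = (swapChainProd l)⁻¹
  | [] | [_] => by simp [swapChainProd]
  | a :: b :: l => by
    rw [List.reverse_cons, List.reverse_cons, List.append_assoc, List.singleton_append,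
      swapChainProd_append_pair, ← List.reverse_cons, swapChainProd_reverse (b :: l),
      swapChainProd, mul_inv_rev, swap_inv, swap_comm b a]

lemma exists_isAlternating_swap_mul_of_head_eq {x y : X} (hxy : x ≠ y) {l : List X}
    (hl : IsAlternating (x :: l)) :
    ∃ l', IsAlternating l' ∧ l'.getLast? = (x :: l).getLast? ∧
      swapChainProd l' = swap x y * swapChainProd (x :: l) := by
  by_cases hly : l.head? = some y
  · obtain ⟨l, rfl⟩ := List.head?_eq_some_iff.1 hly
    refine ⟨y :: l, (isAlternating_cons.1 hl).2.2, List.getLast?_cons_cons.symm, ?_⟩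
    rw [swapChainProd, ← mul_assoc, swap_mul_self, one_mul]
  · refine ⟨y :: x :: l, ?_, List.getLast?_cons_cons, by rw [swapChainProd, swap_comm]⟩
    exact isAlternating_cons.2 ⟨by simpa using hxy.symm, fun c hc hyc => hly (hyc ▸ hc), hl⟩

lemma swap_mul_swap_mul_swap_eq_swap {h a b : X} (hha : h ≠ a) (hhb : h ≠ b) :
    swap h a * swap a b * swap b h = swap a b := by
  rw [← swap_mul_swap_mul_swap hha hhb]
  simp [mul_assoc]

lemma swapChainProd_detour {h a b : X} (hha : h ≠ a) (hhb : h ≠ b) (l : List X) :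
    swapChainProd (h :: a :: b :: h :: l) = swap a b * swapChainProd (h :: l) := by
  simp only [swapChainProd, ← mul_assoc, swap_mul_swap_mul_swap_eq_swap hha hhb]

lemma exists_isAlternating_swap_mul {x y h : X} (hxy : x ≠ y) {l : List X}
    (hl : IsAlternating (h :: l)) :
    ∃ l', IsAlternating l' ∧ l'.getLast? = (h :: l).getLast? ∧
      swapChainProd l' = swap x y * swapChainProd (h :: l) := by
  rcases eq_or_ne h x with rfl | hhx
  · exact exists_isAlternating_swap_mul_of_head_eq hxy hl
  rcases eq_or_ne h y with rfl | hhy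
  · rw [swap_comm]
    exact exists_isAlternating_swap_mul_of_head_eq hxy.symm hl
  by_cases hyl : y ∈ l.head?
  · have hxl : x ∉ l.head? := fun hxl => hxy (Option.mem_unique hxl hyl)
    exact ⟨_, isAlternating_detour hhy hhx hxy.symm hxl hl, by simp,
      by rw [swapChainProd_detour hhy hhx, swap_comm]⟩
  · exact ⟨_, isAlternating_detour hhx hhy hxy hyl hl, by simp, swapChainProd_detour hhx hhy l⟩

lemma exists_isAlternating_getLast?_swapChainProd_eq [Finite X] (z : X) (σ : Perm X) :
    ∃ l, IsAlternating l ∧ l.getLast? = some z ∧ swapChainProd l = σ := by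
  induction σ using Perm.swap_induction_on with
  | one =>
    exact ⟨[z], ⟨List.isChain_singleton z, fun _ _ _ h => by simpa using h.length_le⟩, rfl, rfl⟩
  | swap_mul σ x y hxy ih =>
    obtain ⟨_ | ⟨h, l⟩, hl, hlast, rfl⟩ := ih
    · simp at hlast
    obtain ⟨l', hl', hlast', hprod⟩ := exists_isAlternating_swap_mul hxy hl
    exact ⟨l', hl', hlast'.trans hlast, hprod⟩

lemma exists_isAlternating_cons_swapChainProd_eq [Finite X] (z : X) (σ : Perm X) :
    ∃ u, IsAlternating (z :: u) ∧ swapChainProd (z :: u) = σ := by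
  obtain ⟨l, hl, hlast, hprod⟩ := exists_isAlternating_getLast?_swapChainProd_eq z σ⁻¹
  obtain ⟨u, hu⟩ := List.head?_eq_some_iff.1 (List.head?_reverse.trans hlast)
  refine ⟨u, hu ▸ hl.reverse, ?_⟩
  rw [← hu, swapChainProd_reverse, hprod, inv_inv]

end SwapChain

/-- Every permutation α of {1,…,d} admits an alternated factorization
α = (d u₁)(u₁ u₂)⋯(u_{k-1} u_k): consecutive transpositions share their middle element
(encoded by zipping the chain d :: u with u) and any two indices at distance ≤ 2 in the
chain are distinct. -/
theorem stmt6 (d : ℕ) (hd : 0 < d) (α : Equiv.Perm (Fin d)) :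
    ∃ u : List (Fin d),
      α = ((((⟨d - 1, by omega⟩ : Fin d) :: u).zip u).map
            fun p => Equiv.swap p.1 p.2).prod ∧
      List.Chain' (· ≠ ·) ((⟨d - 1, by omega⟩ : Fin d) :: u) ∧
      ∀ (i : ℕ) (h : i + 2 < ((⟨d - 1, by omega⟩ : Fin d) :: u).length),
        ((⟨d - 1, by omega⟩ : Fin d) :: u).get ⟨i, by omega⟩ ≠
        ((⟨d - 1, by omega⟩ : Fin d) :: u).get ⟨i + 2, h⟩ := by
  obtain ⟨u, hu, hprod⟩ :=
    exists_isAlternating_cons_swapChainProd_eq (⟨d - 1, by omega⟩ : Fin d) α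
  exact ⟨u, hprod.symm.trans (swapChainProd_eq_prod_zip _), hu.1, fun i h => hu.getElem_ne h⟩
end

section
/- Let x ∈ [n]^d be such that x_α is non-decreasing for a permutation α, let i ∈ {1,…,d}, and let j = α⁻¹(i). Then there exists k with j ≤ k ≤ d such that x_{α(j)} = x_{α(j+1)} = ⋯ = x_{α(k)} and either k = d or x_{α(k)} < x_{α(k+1)}; moreover for this k, the tuple obtained from x_α by composing α with the transposition (j k) and incrementing the component x_i equals the tuple (x_α) with its k-th component incremented, and this tuple is non-decreasing (assuming x_i < n). -/
/-!
Take `k` to be the last index at which `x ∘ α` takes the value `x i`. Since `x ∘ α` is monotone,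
it is constant on `[α⁻¹ i, k]` and jumps strictly after `k`, so raising the `k`-th entry by one
keeps it monotone. Raising `x i` instead and then reading through `α ∘ (j k)` gives the same
tuple, because the transposition only exchanges two equal entries of `x ∘ α`.
-/

open Function Finset

theorem Monotone.exists_last_eq {ι β : Type*} [LinearOrder ι] [Fintype ι] [PartialOrder β]
    {f : ι → β} (hf : Monotone f) (j : ι) :
    ∃ k, j ≤ k ∧ (∀ m, j ≤ m → m ≤ k → f m = f j) ∧ ∀ m, k < m → f k < f m := by
  classical
  set S := univ.filter (fun m => f m = f j)
  have hjS : j ∈ S := by simp [S]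
  have hkS : f (S.max' ⟨j, hjS⟩) = f j := by simpa [S] using S.max'_mem ⟨j, hjS⟩
  refine ⟨S.max' ⟨j, hjS⟩, S.le_max' j hjS, fun m hjm hmk => ?_, fun m hkm => ?_⟩
  · exact le_antisymm (hkS ▸ hf hmk) (hf hjm)
  · refine (hf hkm.le).lt_of_ne fun hkm_eq => hkm.not_ge (S.le_max' m ?_)
    simp [S, ← hkm_eq, hkS]

theorem Monotone.update_add_one {ι : Type*} [LinearOrder ι] [DecidableEq ι] {f : ι → ℕ}
    (hf : Monotone f) {k : ι} (hk : ∀ m, k < m → f k < f m) :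
    Monotone (update f k (f k + 1)) := by
  intro a b hab
  rcases eq_or_ne a k with rfl | hak
  · rcases eq_or_ne b a with rfl | hba
    · exact le_rfl
    · simpa [update_of_ne hba] using hk b (hab.lt_of_ne hba.symm)
  · rw [update_of_ne hak]
    rcases eq_or_ne b k with rfl | hbk
    · simpa using (hf hab).trans (Nat.le_succ _)
    · simpa [update_of_ne hbk] using hf hab

theorem Function.update_comp_mul_swap {ι β : Type*} [DecidableEq ι] (f : ι → β)
    (α : Equiv.Perm ι) {j k : ι} (hjk : f (α j) = f (α k)) (v : β) :
    update f (α j) v ∘ ⇑(α * Equiv.swap j k) = update (f ∘ α) k v := by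
  have hswap : (f ∘ α) ∘ Equiv.swap j k = f ∘ α := by
    funext m
    rcases eq_or_ne m j with rfl | hmj
    · simp [hjk]
    rcases eq_or_ne m k with rfl | hmk
    · simp [hjk]
    · simp [Equiv.swap_apply_of_ne_of_ne hmj hmk]
  have hk : (α * Equiv.swap j k).symm (α j) = k := by
    rw [Equiv.symm_apply_eq]
    simp [Equiv.Perm.mul_apply]
  rw [update_comp_equiv, hk, Equiv.Perm.coe_mul, ← comp_assoc, hswap]

theorem stmt9_general (d : ℕ) (x : Fin d → ℕ)
    (α : Equiv.Perm (Fin d)) (hmono : Monotone (x ∘ ⇑α)) (i : Fin d) :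
    ∃ k : Fin d, α⁻¹ i ≤ k ∧
      (∀ m : Fin d, α⁻¹ i ≤ m → m ≤ k → x (α m) = x (α (α⁻¹ i))) ∧
      (∀ h : (k : ℕ) + 1 < d, x (α k) < x (α ⟨(k : ℕ) + 1, h⟩)) ∧
      (Function.update x i (x i + 1)) ∘ ⇑(α * Equiv.swap (α⁻¹ i) k) =
        Function.update (x ∘ ⇑α) k (x (α k) + 1) ∧
      Monotone (Function.update (x ∘ ⇑α) k (x (α k) + 1)) := by
  obtain ⟨k, hjk, hrun, hjump⟩ := hmono.exists_last_eq (α⁻¹ i)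
  have hk : x (α (α⁻¹ i)) = x (α k) := (hrun k hjk le_rfl).symm
  refine ⟨k, hjk, hrun, fun h => hjump _ (Fin.lt_def.2 (Nat.lt_succ_self _)), ?_,
    hmono.update_add_one hjump⟩
  have hi : α (α⁻¹ i) = i := α.apply_symm_apply i
  have hswap := update_comp_mul_swap x α hk (x (α k) + 1)
  rw [hi] at hk hswap
  rwa [hk]

/-- Let x_α be non-decreasing, i an index, j = α⁻¹(i). There is k ≥ j with
x_{α(j)} = ⋯ = x_{α(k)}, and k = d or x_{α(k)} < x_{α(k+1)}; moreover
(x^{(i)})_{α∘(j k)} = (x_α)^{(k)} and this tuple is non-decreasing (assuming x_i < n). -/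
theorem stmt9 (d n : ℕ) (x : Fin d → ℕ) (hrange : ∀ t, 1 ≤ x t ∧ x t ≤ n)
    (α : Equiv.Perm (Fin d)) (hmono : Monotone (x ∘ ⇑α)) (i : Fin d) (hx : x i < n) :
    ∃ k : Fin d, α⁻¹ i ≤ k ∧
      (∀ m : Fin d, α⁻¹ i ≤ m → m ≤ k → x (α m) = x (α (α⁻¹ i))) ∧
      (∀ h : (k : ℕ) + 1 < d, x (α k) < x (α ⟨(k : ℕ) + 1, h⟩)) ∧
      (Function.update x i (x i + 1)) ∘ ⇑(α * Equiv.swap (α⁻¹ i) k) =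
        Function.update (x ∘ ⇑α) k (x (α k) + 1) ∧
      Monotone (Function.update (x ∘ ⇑α) k (x (α k) + 1)) :=
  stmt9_general d x α hmono i
end

section
/- For d ≥ 2, the mirror language Mirror_d — the set of pictures p: [n]^d → {0,1} (for any n ≥ 1) satisfying p(a) = p(a₁₂) for all a ∈ [n]^d, where a₁₂ exchanges the first two components of a — is not a recognizable d-picture language, i.e., it is not the projection of any local d-picture language. -/
/-- The bordered picture p^♯ of a d-picture p : [n]^d → A, with border symbol `none`. -/
def bordered {A : Type} {d n : ℕ} (p : (Fin d → Fin n) → A)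
    (a : Fin d → Fin (n + 2)) : Option A :=
  if h : ∀ i, 1 ≤ (a i : ℕ) ∧ (a i : ℕ) ≤ n then
    some (p fun i => ⟨(a i : ℕ) - 1, by have := h i; omega⟩)
  else none

/-- p is tiled by (Δ₁,…,Δ_d): for every j and every pair of j-adjacent cells a, b of the
bordered picture (b the successor of a along dimension j), (p^♯(a), p^♯(b)) ∈ Δ_j. -/
def Tiled {A : Type} {d n : ℕ} (Δ : Fin d → Set (Option A × Option A))
    (p : (Fin d → Fin n) → A) : Prop :=
  ∀ (j : Fin d) (a b : Fin d → Fin (n + 2)),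
    (∀ i, i ≠ j → a i = b i) → (b j : ℕ) = (a j : ℕ) + 1 →
    (bordered p a, bordered p b) ∈ Δ j

/-!
Cut and paste. Take `n = 2 (K + 1)` with `K = |Γ|²`. Filling the block `{K < a₀, a₁ ≤ K}`
freely and mirroring it gives `2 ^ ((K + 1)² n^(d-2))` pictures of `Mirror_d`, while the
restriction of a tiling to the hyperplane `a₀ = K` takes at most `|Γ| ^ n^(d-1)` values, which is
fewer. So two different blocks have tilings agreeing on that hyperplane. Gluing the left part of
the first tiling to the right part of the second is again a tiling, so its projection is mirror
symmetric; but that projection carries the second block and the mirror image of the first one,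
which therefore agree.
-/

open Function

section Gluing

variable {A : Type} {d n : ℕ}

def glue (j : Fin d) (m : ℕ) (q q' : (Fin d → Fin n) → A) : (Fin d → Fin n) → A :=
  fun a => if (a j : ℕ) ≤ m then q a else q' a

variable {j : Fin d} {m : ℕ} {q q' : (Fin d → Fin n) → A}

theorem bordered_glue_of_le {c : Fin d → Fin (n + 2)} (hc : (c j : ℕ) ≤ m + 1) :
    bordered (glue j m q q') c = bordered q c := by
  unfold bordered glue
  split_ifs with h h'
  · rfl
  · exact absurd (by dsimp only; omega) h'
  · rfl

theorem bordered_glue_of_ge (hqq' : ∀ a, (a j : ℕ) = m → q a = q' a)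
    {c : Fin d → Fin (n + 2)} (hc : m + 1 ≤ (c j : ℕ)) :
    bordered (glue j m q q') c = bordered q' c := by
  unfold bordered glue
  split_ifs with h h'
  · rw [hqq' _ (by dsimp only at h' ⊢; omega)]
  · rfl
  · rfl

theorem Tiled.glue {Δ : Fin d → Set (Option A × Option A)} (hq : Tiled Δ q) (hq' : Tiled Δ q')
    (hqq' : ∀ a, (a j : ℕ) = m → q a = q' a) : Tiled Δ (glue j m q q') := by
  intro i a b hab hsucc
  have hadj : (a j : ℕ) ≤ b j ∧ (b j : ℕ) ≤ a j + 1 := by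
    rcases eq_or_ne i j with rfl | hij
    · omega
    · rw [hab j hij.symm]; omega
  by_cases hb : (b j : ℕ) ≤ m + 1
  · rw [bordered_glue_of_le (by omega), bordered_glue_of_le hb]
    exact hq i a b hab hsucc
  · rw [bordered_glue_of_ge hqq' (by omega), bordered_glue_of_ge hqq' (by omega)]
    exact hq' i a b hab hsucc

end Gluing

section Mirror

variable {A : Type} {d n : ℕ}

def mirrorSymm (i j : Fin d) (p : (Fin d → Fin n) → A) (a : Fin d → Fin n) : A :=
  if a j ≤ a i then p a else p (a ∘ Equiv.swap i j)

theorem mirrorSymm_of_le {i j : Fin d} {p : (Fin d → Fin n) → A} {a : Fin d → Fin n}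
    (h : a j ≤ a i) : mirrorSymm i j p a = p a :=
  if_pos h

theorem mirrorSymm_comp_swap (i j : Fin d) (p : (Fin d → Fin n) → A) (a : Fin d → Fin n) :
    mirrorSymm i j p (a ∘ Equiv.swap i j) = mirrorSymm i j p a := by
  have hswap : (a ∘ Equiv.swap i j) ∘ Equiv.swap i j = a := by
    funext l; simp
  rcases lt_trichotomy (a i) (a j) with h | h | h
  · simp [mirrorSymm, h.le, not_le.mpr h]
  · have hfix : a ∘ Equiv.swap i j = a := by
      funext l
      rcases eq_or_ne l i with rfl | hli
      · simp [h]
      rcases eq_or_ne l j with rfl | hlj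
      · simp [h]
      · simp [Equiv.swap_apply_of_ne_of_ne hli hlj]
    rw [hfix]
  · simp [mirrorSymm, h.le, not_le.mpr h, hswap]

end Mirror

section MirrorNotRecognizable

variable {m K : ℕ}

abbrev BlockIndex (m K : ℕ) : Type := Fin (K + 1) × Fin (K + 1) × (Fin m → Fin (2 * (K + 1)))

/-- The cells `(K + 1 + x, y, r)`: they lie strictly below the diagonal `a 1 = a 0`, in the right
half `K < a 0`, and their mirror images lie in the left half. -/
def blockCell (t : BlockIndex m K) : Fin (m + 2) → Fin (2 * (K + 1)) :=
  Fin.cons ⟨K + 1 + t.1, by omega⟩ (Fin.cons ⟨t.2.1, by omega⟩ t.2.2)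

theorem blockCell_injective : Injective (blockCell (m := m) (K := K)) := by
  rintro ⟨x, y, r⟩ ⟨x', y', r'⟩ h
  obtain ⟨hx, hyr⟩ := Fin.cons_injective2 h
  obtain ⟨hy, rfl⟩ := Fin.cons_injective2 hyr
  simp only [Fin.mk.injEq, Nat.add_left_cancel_iff, Fin.val_inj] at hx hy
  rw [hx, hy]

noncomputable def mirrorPicture (f : BlockIndex m K → Bool) :
    (Fin (m + 2) → Fin (2 * (K + 1))) → Bool :=
  mirrorSymm 0 1 (extend blockCell f fun _ => false)

theorem mirrorPicture_blockCell (f : BlockIndex m K → Bool) (t : BlockIndex m K) :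
    mirrorPicture f (blockCell t) = f t := by
  rw [mirrorPicture, mirrorSymm_of_le, blockCell_injective.extend_apply]
  simp only [blockCell, Fin.cons_one, Fin.cons_zero, Fin.le_def]
  omega

theorem mirrorPicture_blockCell_swap (f : BlockIndex m K → Bool) (t : BlockIndex m K) :
    mirrorPicture f (blockCell t ∘ Equiv.swap 0 1) = f t := by
  rw [mirrorPicture, mirrorSymm_comp_swap, ← mirrorPicture, mirrorPicture_blockCell]

variable {Γ : Type} {π : Γ → Bool} {Δ : Fin (m + 2) → Set (Option Γ × Option Γ)}

theorem eq_of_tiled_mirrorPicture_agree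
    (hsymm : ∀ q : (Fin (m + 2) → Fin (2 * (K + 1))) → Γ, Tiled Δ q →
      ∀ a, π (q a) = π (q (a ∘ Equiv.swap 0 1)))
    {f f' : BlockIndex m K → Bool}
    {q q' : (Fin (m + 2) → Fin (2 * (K + 1))) → Γ} (hq : Tiled Δ q) (hq' : Tiled Δ q')
    (hπq : π ∘ q = mirrorPicture f) (hπq' : π ∘ q' = mirrorPicture f')
    (hqq' : ∀ a, (a 0 : ℕ) = K → q a = q' a) : f = f' := by
  funext t
  have hglue := hsymm _ (hq.glue hq' hqq') (blockCell t)
  have hright : K < (blockCell t 0 : ℕ) := by simp only [blockCell, Fin.cons_zero]; omega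
  have hleft : ((blockCell t ∘ Equiv.swap 0 1) 0 : ℕ) ≤ K := by
    simp only [blockCell, comp_apply, Equiv.swap_apply_left, Fin.cons_one, Fin.cons_zero]; omega
  -- the glued tiling reads `q'` at a block cell and `q` at its mirror image
  rw [glue, if_neg hright.not_ge, glue, if_pos hleft] at hglue
  rw [← mirrorPicture_blockCell f' t, ← mirrorPicture_blockCell_swap f t, ← hπq, ← hπq']
  exact hglue.symm

theorem pow_lt_two_pow_sq (g : ℕ) : g ^ (2 * (g ^ 2 + 1)) < 2 ^ ((g ^ 2 + 1) * (g ^ 2 + 1)) := by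
  have hg : g ^ 2 < 2 ^ (g ^ 2 + 1) :=
    (Nat.lt_two_pow_self).trans (Nat.pow_lt_pow_right (by norm_num) (by omega))
  rw [pow_mul, pow_mul]
  exact Nat.pow_lt_pow_left hg (by omega)

theorem not_forall_mirror_iff_tiled [Fintype Γ] :
    ¬ ∀ p : (Fin (m + 2) → Fin (2 * (Fintype.card Γ ^ 2 + 1))) → Bool,
      (∀ a, p a = p (a ∘ Equiv.swap 0 1)) ↔ ∃ q, Tiled Δ q ∧ p = π ∘ q := by
  intro H
  set K := Fintype.card Γ ^ 2
  have hsymm : ∀ q, Tiled Δ q → ∀ a, π (q a) = π (q (a ∘ Equiv.swap 0 1)) :=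
    fun q hq => (H (π ∘ q)).mpr ⟨q, hq, rfl⟩
  choose Q hQ hπQ using fun f : BlockIndex m K → Bool =>
    (H (mirrorPicture f)).mp fun a => (mirrorSymm_comp_swap _ _ _ a).symm
  let interface f (y : Fin (m + 1) → Fin (2 * (K + 1))) : Γ := Q f (Fin.cons ⟨K, by omega⟩ y)
  have hinj : Injective interface := by
    intro f f' h
    refine eq_of_tiled_mirrorPicture_agree hsymm (hQ f) (hQ f') (hπQ f).symm (hπQ f').symm ?_
    intro a ha
    rw [← Fin.cons_self_tail a, show a 0 = ⟨K, by omega⟩ from Fin.ext ha]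
    exact congrFun h (Fin.tail a)
  have hcard := Fintype.card_le_of_injective interface hinj
  simp only [Fintype.card_fun, Fintype.card_prod, Fintype.card_fin, Fintype.card_bool] at hcard
  rw [pow_succ', ← mul_assoc] at hcard
  have hlt := Nat.pow_lt_pow_left (pow_lt_two_pow_sq (Fintype.card Γ))
    (pow_ne_zero m (by omega : 2 * (K + 1) ≠ 0))
  rw [← pow_mul, ← pow_mul] at hlt
  exact (hlt.trans_le hcard).false

end MirrorNotRecognizable

/-- For d ≥ 2, the mirror language Mirror_d (pictures p : [n]^d → {0,1}
with p(a) = p(a₁₂)) is not recognizable: it is not the projection, via any surjection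
π : Γ → {0,1} from a finite alphabet, of any local (tiled) d-picture language. -/
theorem stmt10 (d : ℕ) (hd : 2 ≤ d) :
    ¬ ∃ (Γ : Type) (_ : Fintype Γ) (π : Γ → Bool)
        (Δ : Fin d → Set (Option Γ × Option Γ)),
        Function.Surjective π ∧
        ∀ (n : ℕ), 1 ≤ n → ∀ p : (Fin d → Fin n) → Bool,
          ((∀ a, p a = p (a ∘ ⇑(Equiv.swap (⟨0, by omega⟩ : Fin d) ⟨1, by omega⟩))) ↔
            ∃ q : (Fin d → Fin n) → Γ, Tiled Δ q ∧ p = π ∘ q) := by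
  rintro ⟨Γ, _, π, Δ, -, H⟩
  obtain ⟨m, rfl⟩ : ∃ m, d = m + 2 := ⟨d - 2, by omega⟩
  exact not_forall_mirror_iff_tiled (H _ (by omega))
end

section
/- Let x ∈ [n]^d, let α be a permutation of {1,…,d}, and suppose β = α∘(i j) arises from α along an alternated factorization whose last transposition before (i j) involved i (or α = id and i = d). Then the j-th component of x_β equals the d-th component of x, i.e., [x_{α.(i j)}]_j = [x]_d. -/
/-! Along the chain the index introduced last is always sent to the top index: this holds
for the identity, and `(α * swap i j) j = α i` carries it from `α, i` to `α * swap i j, j`. -/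

/-- `Reaches d α i`: the permutation α of {1,…,d+1} is reached along a chain of
alternated factorizations, its last transposition having introduced the index i
(the identity is reached with the top index d+1 = Fin.last d). -/
inductive Reaches (d : ℕ) : Equiv.Perm (Fin (d + 1)) → Fin (d + 1) → Prop
  | base : Reaches d 1 (Fin.last d)
  | step {α : Equiv.Perm (Fin (d + 1))} {i j : Fin (d + 1)} :
      Reaches d α i → j ≠ i → Reaches d (α * Equiv.swap i j) j

lemma Reaches.apply_eq_last {d : ℕ} {α : Equiv.Perm (Fin (d + 1))} {i : Fin (d + 1)}
    (h : Reaches d α i) : α i = Fin.last d := by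
  induction h with
  | base => rfl
  | step _ _ ih => simpa using ih

theorem stmt15_general (d n : ℕ) (α : Equiv.Perm (Fin (d + 1))) (i j : Fin (d + 1))
    (h : Reaches d α i) (x : Fin (d + 1) → Fin n) :
    (x ∘ ⇑(α * Equiv.swap i j)) j = x (Fin.last d) := by
  rw [Function.comp_apply, Equiv.Perm.mul_apply, Equiv.swap_apply_right, h.apply_eq_last]

/-- If β = α∘(i j) arises from α along an alternated factorization whose
last transposition involved i (or α = id and i the top index), then the j-th component
of x_β equals the last component of x: [x_{α.(i j)}]_j = [x]_{d+1}. -/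
theorem stmt15 (d n : ℕ) (α : Equiv.Perm (Fin (d + 1))) (i j : Fin (d + 1))
    (h : Reaches d α i) (hij : j ≠ i) (x : Fin (d + 1) → Fin n) :
    (x ∘ ⇑(α * Equiv.swap i j)) j = x (Fin.last d) :=
  stmt15_general d n α i j h x
end
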